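/- Let T : C → C be a κ-contraction with fixed point x* ∈ C, κ ∈ [0,1), and let {x̃_n} be an inexact orbit with d(x̃_{n+1}, T x̃_n) ≤ η_n. If Σ_{j≥0} η_j < ∞, then d(x̃_n, x*) → 0 as n → ∞. -/
import Mathlib

theorem stmt_11 {X : Type*} [MetricSpace X] (C : Set X)
    (T : X → X) (hT : Set.MapsTo T C C)
    (κ : ℝ) (hκ0 : 0 ≤ κ) (hκ1 : κ < 1)
    (hcontr : ∀ x ∈ C, ∀ y ∈ C, dist (T x) (T y) ≤ κ * dist x y)
    (xs : X) (hxs : xs ∈ C) (hfix : T xs = xs)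
    (η : ℕ → ℝ) (hη : ∀ n, 0 ≤ η n) (hsum : Summable η)
    (xt : ℕ → X) (hxtC : ∀ n, xt n ∈ C)
    (hinexact : ∀ n, dist (xt (n + 1)) (T (xt n)) ≤ η n) :
    Filter.Tendsto (fun n => dist (xt n) xs) Filter.atTop (nhds 0) := by
  set a : ℕ → ℝ := fun n => dist (xt n) xs with ha
  have hrec : ∀ n, a (n + 1) ≤ κ * a n + η n := by
    intro n
    calc a (n + 1) ≤ dist (xt (n + 1)) (T (xt n)) + dist (T (xt n)) xs :=
          dist_triangle _ _ _
      _ ≤ η n + κ * a n := by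
          refine add_le_add (hinexact n) ?_
          have := hcontr (xt n) (hxtC n) xs hxs
          rwa [hfix] at this
      _ = κ * a n + η n := by ring
  have hkey : ∀ N m, a (N + m) ≤ κ ^ m * a N + ∑ j ∈ Finset.range m, η (N + j) := by
    intro N m
    induction m with
    | zero => simp
    | succ m ih =>
      calc a (N + (m + 1)) = a ((N + m) + 1) := by ring_nf
        _ ≤ κ * a (N + m) + η (N + m) := hrec _
        _ ≤ κ * (κ ^ m * a N + ∑ j ∈ Finset.range m, η (N + j)) + η (N + m) := by
            nlinarith [mul_le_mul_of_nonneg_left ih hκ0]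
        _ ≤ κ ^ (m + 1) * a N + ∑ j ∈ Finset.range (m + 1), η (N + j) := by
            rw [Finset.sum_range_succ]
            have hsnn : (0:ℝ) ≤ ∑ j ∈ Finset.range m, η (N + j) :=
              Finset.sum_nonneg fun j _ => hη _
            have h1 : κ * ∑ j ∈ Finset.range m, η (N + j) ≤ ∑ j ∈ Finset.range m, η (N + j) := by
              nlinarith
            have h2 : κ * (κ ^ m * a N) = κ ^ (m + 1) * a N := by ring
            linarith
  rw [Metric.tendsto_atTop]
  intro ε hε
  -- choose N with tail sum < ε/2
  have htail : Filter.Tendsto (fun i => ∑' k, η (k + i)) Filter.atTop (nhds 0) :=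
    tendsto_sum_nat_add η
  obtain ⟨N, hN⟩ := (Metric.tendsto_atTop.mp htail (ε / 2) (by linarith)) 
  have hNtail : ∑' k, η (k + N) < ε / 2 := by
    have := hN N le_rfl
    rwa [Real.dist_eq, sub_zero, abs_of_nonneg (tsum_nonneg fun k => hη _)] at this
  -- choose M with κ^M * a N < ε/2
  have hpow : Filter.Tendsto (fun m => κ ^ m * a N) Filter.atTop (nhds 0) := by
    simpa using (tendsto_pow_atTop_nhds_zero_of_lt_one hκ0 hκ1).mul_const (a N)
  obtain ⟨M, hM⟩ := (Metric.tendsto_atTop.mp hpow (ε / 2) (by linarith))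
  refine ⟨N + M, fun n hn => ?_⟩
  obtain ⟨m, rfl⟩ : ∃ m, n = N + m := ⟨n - N, by omega⟩
  have hmM : M ≤ m := by omega
  have h1 : κ ^ m * a N < ε / 2 := by
    have := hM m hmM
    rwa [Real.dist_eq, sub_zero,
      abs_of_nonneg (mul_nonneg (pow_nonneg hκ0 m) dist_nonneg)] at this
  have h2 : ∑ j ∈ Finset.range m, η (N + j) ≤ ∑' k, η (k + N) := by
    have hs : Summable fun k => η (k + N) := (summable_nat_add_iff N).mpr hsum
    calc ∑ j ∈ Finset.range m, η (N + j) = ∑ j ∈ Finset.range m, η (j + N) := by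
          simp [add_comm]
      _ ≤ ∑' k, η (k + N) := Summable.sum_le_tsum _ (fun k _ => hη _) hs
  have := hkey N m
  rw [Real.dist_eq, sub_zero, abs_of_nonneg dist_nonneg]
  calc a (N + m) ≤ κ ^ m * a N + ∑ j ∈ Finset.range m, η (N + j) := this
    _ < ε / 2 + ε / 2 := by linarith
    _ = ε := by ring
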